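/- arXiv:1804.07699 — 6 statements merged into one kernel-verified Lean document; each statement's English description precedes it below -/
import Mathlib

section
/- There exist strongly convex functions f₁, f₂: ℝ² → ℝ whose minimizers are (0,0) and (2,0) respectively, such that the minimizer of f₁ + f₂ is (1,1), which does not lie in the convex hull (segment) of the two individual minimizers. Concretely, f₁(x,y) = x² − xy + y²/2 and f₂(x,y) = x² + xy + y²/2 − 4x − 2y work. -/
open Real

private lemma norm_sq_two (x y : EuclideanSpace ℝ (Fin 2)) :
    ‖x - y‖ ^ 2 = (x 0 - y 0) ^ 2 + (x 1 - y 1) ^ 2 := by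
  rw [EuclideanSpace.norm_eq, Real.sq_sqrt (by positivity)]
  simp [Fin.sum_univ_two, sq_abs]

private lemma eval_smul_add (a b : ℝ) (x y : EuclideanSpace ℝ (Fin 2)) (i : Fin 2) :
    (a • x + b • y) i = a * x i + b * y i := rfl

/-- The minimizer of a sum of two strongly convex functions need not lie in the convex hull
(segment) of the two individual minimizers: `f₁(x,y) = x² - xy + y²/2` and
`f₂(x,y) = x² + xy + y²/2 - 4x - 2y` have minimizers `(0,0)` and `(2,0)`, but the minimizer
of `f₁ + f₂` is `(1,1)`. -/
theorem stmt5 :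
    ∃ σ : ℝ, 0 < σ ∧
      StrongConvexOn Set.univ σ
        (fun p : EuclideanSpace ℝ (Fin 2) => (p 0) ^ 2 - p 0 * p 1 + (p 1) ^ 2 / 2) ∧
      StrongConvexOn Set.univ σ
        (fun p : EuclideanSpace ℝ (Fin 2) =>
          (p 0) ^ 2 + p 0 * p 1 + (p 1) ^ 2 / 2 - 4 * p 0 - 2 * p 1) ∧
      IsMinOn (fun p : EuclideanSpace ℝ (Fin 2) => (p 0) ^ 2 - p 0 * p 1 + (p 1) ^ 2 / 2)
        Set.univ ((WithLp.equiv 2 (Fin 2 → ℝ)).symm ![0, 0]) ∧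
      IsMinOn (fun p : EuclideanSpace ℝ (Fin 2) =>
          (p 0) ^ 2 + p 0 * p 1 + (p 1) ^ 2 / 2 - 4 * p 0 - 2 * p 1)
        Set.univ ((WithLp.equiv 2 (Fin 2 → ℝ)).symm ![2, 0]) ∧
      IsMinOn (fun p : EuclideanSpace ℝ (Fin 2) =>
          ((p 0) ^ 2 - p 0 * p 1 + (p 1) ^ 2 / 2) +
            ((p 0) ^ 2 + p 0 * p 1 + (p 1) ^ 2 / 2 - 4 * p 0 - 2 * p 1))
        Set.univ ((WithLp.equiv 2 (Fin 2 → ℝ)).symm ![1, 1]) ∧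
      ((WithLp.equiv 2 (Fin 2 → ℝ)).symm ![1, 1] : EuclideanSpace ℝ (Fin 2)) ∉
        segment ℝ ((WithLp.equiv 2 (Fin 2 → ℝ)).symm ![0, 0])
          ((WithLp.equiv 2 (Fin 2 → ℝ)).symm ![2, 0]) := by
  refine ⟨1/4, by norm_num, ?_, ?_, ?_, ?_, ?_, ?_⟩
  · refine ⟨convex_univ, fun x _ y _ a b ha hb hab => ?_⟩
    simp only [eval_smul_add, smul_eq_mul]
    rw [norm_sq_two]
    have h : b = 1 - a := by linarith
    subst h
    nlinarith [sq_nonneg (x 0 - y 0 - (x 1 - y 1)), sq_nonneg (x 1 - y 1),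
      sq_nonneg (x 0 - y 0), mul_nonneg ha hb,
      mul_nonneg (mul_nonneg ha hb) (sq_nonneg (x 0 - y 0 - 4/7 * (x 1 - y 1))),
      mul_nonneg (mul_nonneg ha hb) (sq_nonneg (x 1 - y 1))]
  · refine ⟨convex_univ, fun x _ y _ a b ha hb hab => ?_⟩
    simp only [eval_smul_add, smul_eq_mul]
    rw [norm_sq_two]
    have h : b = 1 - a := by linarith
    subst h
    nlinarith [mul_nonneg ha hb,
      mul_nonneg (mul_nonneg ha hb) (sq_nonneg (x 0 - y 0 + 4/7 * (x 1 - y 1))),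
      mul_nonneg (mul_nonneg ha hb) (sq_nonneg (x 1 - y 1))]
  · refine isMinOn_iff.mpr fun p _ => ?_
    have h0 : ((WithLp.equiv 2 (Fin 2 → ℝ)).symm ![(0:ℝ), 0] : EuclideanSpace ℝ (Fin 2)) 0 = 0 := rfl
    have h1 : ((WithLp.equiv 2 (Fin 2 → ℝ)).symm ![(0:ℝ), 0] : EuclideanSpace ℝ (Fin 2)) 1 = 0 := rfl
    simp only [h0, h1]
    nlinarith [sq_nonneg (p 0 - p 1), sq_nonneg (p 1)]
  · refine isMinOn_iff.mpr fun p _ => ?_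
    have h0 : ((WithLp.equiv 2 (Fin 2 → ℝ)).symm ![(2:ℝ), 0] : EuclideanSpace ℝ (Fin 2)) 0 = 2 := rfl
    have h1 : ((WithLp.equiv 2 (Fin 2 → ℝ)).symm ![(2:ℝ), 0] : EuclideanSpace ℝ (Fin 2)) 1 = 0 := rfl
    simp only [h0, h1]
    nlinarith [sq_nonneg (p 0 + p 1 - 2), sq_nonneg (p 1), sq_nonneg (p 0 - 2)]
  · refine isMinOn_iff.mpr fun p _ => ?_
    have h0 : ((WithLp.equiv 2 (Fin 2 → ℝ)).symm ![(1:ℝ), 1] : EuclideanSpace ℝ (Fin 2)) 0 = 1 := rfl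
    have h1 : ((WithLp.equiv 2 (Fin 2 → ℝ)).symm ![(1:ℝ), 1] : EuclideanSpace ℝ (Fin 2)) 1 = 1 := rfl
    simp only [h0, h1]
    nlinarith [sq_nonneg (p 0 - 1), sq_nonneg (p 1 - 1)]
  · rintro ⟨a, b, ha, hb, hab, h⟩
    have := congrFun (congrArg (WithLp.equiv 2 (Fin 2 → ℝ)) h) 1
    have h2 : (a • ((WithLp.equiv 2 (Fin 2 → ℝ)).symm ![(0:ℝ), 0] : EuclideanSpace ℝ (Fin 2))
        + b • ((WithLp.equiv 2 (Fin 2 → ℝ)).symm ![(2:ℝ), 0] : EuclideanSpace ℝ (Fin 2))) 1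
        = a * 0 + b * 0 := rfl
    have h3 : ((WithLp.equiv 2 (Fin 2 → ℝ)).symm ![(1:ℝ), 1] : EuclideanSpace ℝ (Fin 2)) 1 = 1 := rfl
    have h4 := congrArg (fun v : EuclideanSpace ℝ (Fin 2) => v 1) h
    rw [h2, h3] at h4
    norm_num at h4
end

section
/- Let x₁* = (−r,0,…,0), x₂* = (r,0,…,0), and x = (z₁, z) ∈ ℝⁿ \ {x₁*, x₂*} with (σ_i/L)d_i ≤ 1 for i = 1,2, where d₁ = √((z₁+r)² + ‖z‖²) and d₂ = √((z₁−r)² + ‖z‖²). Then the equation φ̃₁(x) + φ̃₂(x) = π − (α₂(x) − α₁(x)) holds if and only if (z₁² + ‖z‖² − r²)/(d₁² d₂²) + σ₁σ₂/L² = √(1/d₁² − σ₁²/L²) · √(1/d₂² − σ₂²/L²). -/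
open Real InnerProductGeometry

set_option maxHeartbeats 1000000

private lemma sq_le_imp {a b : ℝ} (ha : 0 ≤ a) (hb : 0 ≤ b) (h : a ^ 2 ≤ b ^ 2) : a ≤ b := by
  nlinarith

/-- The angle equation `φ̃₁(x) + φ̃₂(x) = π - (α₂(x) - α₁(x))` is equivalent to the
algebraic boundary equation defining `𝒯ₙ`. -/
theorem stmt9 {n : ℕ} (σ₁ σ₂ L r : ℝ) (hσ₁ : 0 < σ₁) (hσ₂ : 0 < σ₂) (hL : 0 < L)
    (hr : 0 < r)
    (x₁ x₂ x : EuclideanSpace ℝ (Fin (n + 1)))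
    (hx₁ : x₁ = EuclideanSpace.single 0 (-r))
    (hx₂ : x₂ = EuclideanSpace.single 0 r)
    (hne₁ : x ≠ x₁) (hne₂ : x ≠ x₂)
    (zn d₁ d₂ : ℝ)
    (hzn : zn = Real.sqrt (∑ i : Fin (n + 1), if i = 0 then 0 else (x i) ^ 2))
    (hd₁ : d₁ = ‖x - x₁‖) (hd₂ : d₂ = ‖x - x₂‖)
    (hb₁ : σ₁ / L * d₁ ≤ 1) (hb₂ : σ₂ / L * d₂ ≤ 1) :
    Real.arccos (σ₁ / L * d₁) + Real.arccos (σ₂ / L * d₂) =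
        π - (angle (x - x₂) (x₂ - x₁) - angle (x - x₁) (x₂ - x₁)) ↔
      ((x 0) ^ 2 + zn ^ 2 - r ^ 2) / (d₁ ^ 2 * d₂ ^ 2) + σ₁ * σ₂ / L ^ 2 =
        Real.sqrt (1 / d₁ ^ 2 - σ₁ ^ 2 / L ^ 2) *
          Real.sqrt (1 / d₂ ^ 2 - σ₂ ^ 2 / L ^ 2) := by
  set z₁ := x 0 with hz₁
  have hd₁pos : 0 < d₁ := by rw [hd₁]; simpa [sub_ne_zero] using hne₁
  have hd₂pos : 0 < d₂ := by rw [hd₂]; simpa [sub_ne_zero] using hne₂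
  have hznnn : 0 ≤ zn := hzn ▸ Real.sqrt_nonneg _
  have hzn2 : zn ^ 2 = ∑ i : Fin n, (x i.succ) ^ 2 := by
    rw [hzn, Real.sq_sqrt]
    · rw [Fin.sum_univ_succ]
      simp [Fin.succ_ne_zero]
    · exact Finset.sum_nonneg fun i _ => by positivity
  have hd₁sq : d₁ ^ 2 = (z₁ + r) ^ 2 + zn ^ 2 := by
    have h : d₁ ^ 2 = ∑ i : Fin (n+1), (x i - x₁ i) ^ 2 := by
      rw [hd₁, EuclideanSpace.norm_eq, Real.sq_sqrt (by positivity)]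
      simp [sq_abs]
    rw [h, Fin.sum_univ_succ, hx₁, hzn2]
    simp [EuclideanSpace.single_apply, Fin.succ_ne_zero, hz₁]
  have hd₂sq : d₂ ^ 2 = (z₁ - r) ^ 2 + zn ^ 2 := by
    have h : d₂ ^ 2 = ∑ i : Fin (n+1), (x i - x₂ i) ^ 2 := by
      rw [hd₂, EuclideanSpace.norm_eq, Real.sq_sqrt (by positivity)]
      simp [sq_abs]
    rw [h, Fin.sum_univ_succ, hx₂, hzn2]
    simp [EuclideanSpace.single_apply, Fin.succ_ne_zero, hz₁]
  have hbase : x₂ - x₁ = EuclideanSpace.single 0 (2 * r) := by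
    rw [hx₁, hx₂]
    ext i
    simp [EuclideanSpace.single_apply]
    split <;> ring
  have hnbase : ‖x₂ - x₁‖ = 2 * r := by
    rw [hbase, EuclideanSpace.norm_single, Real.norm_eq_abs, abs_of_pos (by positivity)]
  have hinner₁ : (inner ℝ (x - x₁) (x₂ - x₁) : ℝ) = (z₁ + r) * (2 * r) := by
    rw [hbase, hx₁, PiLp.inner_apply, Fin.sum_univ_succ]
    simp [EuclideanSpace.single_apply, Fin.succ_ne_zero, hz₁]
    ring
  have hinner₂ : (inner ℝ (x - x₂) (x₂ - x₁) : ℝ) = (z₁ - r) * (2 * r) := by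
    rw [hbase, hx₂, PiLp.inner_apply, Fin.sum_univ_succ]
    simp [EuclideanSpace.single_apply, Fin.succ_ne_zero, hz₁]
    ring
  set α₁ := angle (x - x₁) (x₂ - x₁) with hα₁
  set α₂ := angle (x - x₂) (x₂ - x₁) with hα₂
  have hcos₁ : Real.cos α₁ = (z₁ + r) / d₁ := by
    rw [hα₁, cos_angle, hinner₁, ← hd₁, hnbase]
    field_simp
  have hcos₂ : Real.cos α₂ = (z₁ - r) / d₂ := by
    rw [hα₂, cos_angle, hinner₂, ← hd₂, hnbase]
    field_simp
  have hsin₁ : Real.sin α₁ = zn / d₁ := by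
    rw [Real.sin_eq_sqrt_one_sub_cos_sq (angle_nonneg _ _) (angle_le_pi _ _), hcos₁]
    rw [show 1 - ((z₁ + r) / d₁) ^ 2 = (zn / d₁) ^ 2 by
      field_simp
      nlinarith [hd₁sq]]
    exact Real.sqrt_sq (by positivity)
  have hsin₂ : Real.sin α₂ = zn / d₂ := by
    rw [Real.sin_eq_sqrt_one_sub_cos_sq (angle_nonneg _ _) (angle_le_pi _ _), hcos₂]
    rw [show 1 - ((z₁ - r) / d₂) ^ 2 = (zn / d₂) ^ 2 by
      field_simp
      nlinarith [hd₂sq]]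
    exact Real.sqrt_sq (by positivity)
  -- α₁ ≤ α₂
  have hcosle : Real.cos α₂ ≤ Real.cos α₁ := by
    rw [hcos₁, hcos₂, div_le_div_iff₀ hd₂pos hd₁pos]
    rcases le_or_gt (z₁ + r) 0 with hB | hB
    · have hA : z₁ - r ≤ 0 := by linarith
      have hz₁neg : 0 ≤ -z₁ := by linarith
      have key : ((-(z₁ + r)) * d₂) ^ 2 ≤ ((-(z₁ - r)) * d₁) ^ 2 := by
        nlinarith [hd₁sq, hd₂sq,
          mul_nonneg (sq_nonneg zn) (mul_nonneg hz₁neg hr.le)]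
      have := sq_le_imp (mul_nonneg (by linarith) hd₂pos.le)
        (mul_nonneg (by linarith) hd₁pos.le) key
      linarith
    · rcases le_or_gt (z₁ - r) 0 with hA | hA
      · have h1 : (z₁ - r) * d₁ ≤ 0 := mul_nonpos_of_nonpos_of_nonneg hA hd₁pos.le
        have h2 : 0 ≤ (z₁ + r) * d₂ := mul_nonneg hB.le hd₂pos.le
        linarith
      · have hz₁pos : 0 ≤ z₁ := by linarith
        have key : ((z₁ - r) * d₁) ^ 2 ≤ ((z₁ + r) * d₂) ^ 2 := by
          nlinarith [hd₁sq, hd₂sq,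
            mul_nonneg (sq_nonneg zn) (mul_nonneg hz₁pos hr.le)]
        exact sq_le_imp (mul_nonneg hA.le hd₁pos.le) (mul_nonneg hB.le hd₂pos.le) key
  have hαle : α₁ ≤ α₂ := by
    by_contra hlt
    push_neg at hlt
    have := Real.strictAntiOn_cos ⟨angle_nonneg _ _, angle_le_pi _ _⟩
      ⟨angle_nonneg _ _, angle_le_pi _ _⟩ hlt
    linarith
  have ha₁pos : 0 < σ₁ / L * d₁ := by positivity
  have ha₂pos : 0 < σ₂ / L * d₂ := by positivity
  have hmemL : Real.arccos (σ₁ / L * d₁) + Real.arccos (σ₂ / L * d₂) ∈ Set.Icc 0 π := by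
    constructor
    · have := Real.arccos_nonneg (σ₁ / L * d₁)
      have := Real.arccos_nonneg (σ₂ / L * d₂)
      linarith
    · have h1 := Real.arccos_lt_pi_div_two.2 ha₁pos
      have h2 := Real.arccos_lt_pi_div_two.2 ha₂pos
      linarith
  have hmemR : π - (α₂ - α₁) ∈ Set.Icc 0 π := by
    have h1 : α₂ ≤ π := angle_le_pi _ _
    have h2 : 0 ≤ α₁ := angle_nonneg _ _
    exact ⟨by linarith, by linarith⟩
  have hcosL : Real.cos (Real.arccos (σ₁ / L * d₁) + Real.arccos (σ₂ / L * d₂)) =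
      (σ₁ / L * d₁) * (σ₂ / L * d₂) -
        (d₁ * Real.sqrt (1 / d₁ ^ 2 - σ₁ ^ 2 / L ^ 2)) *
        (d₂ * Real.sqrt (1 / d₂ ^ 2 - σ₂ ^ 2 / L ^ 2)) := by
    rw [Real.cos_add, Real.cos_arccos (by linarith) hb₁, Real.cos_arccos (by linarith) hb₂,
      Real.sin_arccos, Real.sin_arccos]
    have e₁ : 1 - (σ₁ / L * d₁) ^ 2 = d₁ ^ 2 * (1 / d₁ ^ 2 - σ₁ ^ 2 / L ^ 2) := by
      field_simp
    have e₂ : 1 - (σ₂ / L * d₂) ^ 2 = d₂ ^ 2 * (1 / d₂ ^ 2 - σ₂ ^ 2 / L ^ 2) := by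
      field_simp
    rw [e₁, e₂, Real.sqrt_mul (by positivity), Real.sqrt_mul (by positivity),
      Real.sqrt_sq hd₁pos.le, Real.sqrt_sq hd₂pos.le]
  have hcosR : Real.cos (π - (α₂ - α₁)) =
      (-((z₁ - r) * (z₁ + r) + zn ^ 2)) / (d₁ * d₂) := by
    rw [Real.cos_pi_sub, Real.cos_sub, hcos₁, hcos₂, hsin₁, hsin₂]
    field_simp
  have algiff : ((σ₁ / L * d₁) * (σ₂ / L * d₂) -
        (d₁ * Real.sqrt (1 / d₁ ^ 2 - σ₁ ^ 2 / L ^ 2)) *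
        (d₂ * Real.sqrt (1 / d₂ ^ 2 - σ₂ ^ 2 / L ^ 2)) =
        (-((z₁ - r) * (z₁ + r) + zn ^ 2)) / (d₁ * d₂)) ↔
      ((z₁ ^ 2 + zn ^ 2 - r ^ 2) / (d₁ ^ 2 * d₂ ^ 2) + σ₁ * σ₂ / L ^ 2 =
        Real.sqrt (1 / d₁ ^ 2 - σ₁ ^ 2 / L ^ 2) *
          Real.sqrt (1 / d₂ ^ 2 - σ₂ ^ 2 / L ^ 2)) := by
    rw [eq_div_iff (by positivity : (d₁ * d₂ : ℝ) ≠ 0),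
      div_add' _ _ _ (by positivity : (d₁ ^ 2 * d₂ ^ 2 : ℝ) ≠ 0),
      div_eq_iff (by positivity : (d₁ ^ 2 * d₂ ^ 2 : ℝ) ≠ 0)]
    constructor <;> intro h <;> linear_combination h
  constructor
  · intro h
    exact algiff.1 (by rw [← hcosL, ← hcosR, h])
  · intro h
    exact Real.injOn_cos hmemL hmemR (by rw [hcosL, hcosR]; exact algiff.2 h)
end

section
/- Let x₁* = (−r,0,…,0), x₂* = (r,0,…,0), σ₁, σ₂, L, r > 0, and let x = (z₁, z) ∈ ∂H₁ = {x : ‖x − x₁*‖ = L/σ₁}, x ∉ {x₁*, x₂*}, with ‖x − x₂*‖ ≤ L/σ₂. Then φ̃₁(x) + φ̃₂(x) < π − (α₂(x) − α₁(x)) if and only if z₁ < λ₁, where λ₁ = ((1+β)/(1+2β))·(γ₁/(2r)) − r/(1+2β), with β = σ₂/σ₁ and γ₁ = L²/σ₁². -/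
open Real InnerProductGeometry
open scoped RealInnerProductSpace

private lemma sq_le_neg {u v : ℝ} (hu : u ≤ 0) (hv : v ≤ 0) (h : u^2 ≤ v^2) : v ≤ u := by
  nlinarith

private lemma sq_le_pos {u v : ℝ} (hu : 0 ≤ u) (hv : 0 ≤ v) (h : u^2 ≤ v^2) : u ≤ v := by
  nlinarith

set_option maxHeartbeats 1000000 in
/-- For a point `x` on the sphere `∂H₁ = {x : ‖x - x₁*‖ = L/σ₁}` (and inside the second
ball), the strict angle inequality `φ̃₁(x) + φ̃₂(x) < π - (α₂(x) - α₁(x))` holds iff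
`z₁ < λ₁`, where `λ₁ = ((1+β)/(1+2β))(γ₁/(2r)) - r/(1+2β)`, `β = σ₂/σ₁`, `γ₁ = L²/σ₁²`. -/
theorem stmt12 {n : ℕ} (σ₁ σ₂ L r : ℝ) (hσ₁ : 0 < σ₁) (hσ₂ : 0 < σ₂) (hL : 0 < L)
    (hr : 0 < r)
    (x₁ x₂ x : EuclideanSpace ℝ (Fin (n + 1)))
    (hx₁ : x₁ = EuclideanSpace.single 0 (-r))
    (hx₂ : x₂ = EuclideanSpace.single 0 r)
    (hne₁ : x ≠ x₁) (hne₂ : x ≠ x₂)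
    (hsphere : ‖x - x₁‖ = L / σ₁) (hball : ‖x - x₂‖ ≤ L / σ₂)
    (β γ₁ lam₁ : ℝ) (hβ : β = σ₂ / σ₁) (hγ₁ : γ₁ = L ^ 2 / σ₁ ^ 2)
    (hlam : lam₁ = (1 + β) / (1 + 2 * β) * (γ₁ / (2 * r)) - r / (1 + 2 * β)) :
    Real.arccos (σ₁ / L * ‖x - x₁‖) + Real.arccos (σ₂ / L * ‖x - x₂‖) <
        π - (angle (x - x₂) (x₂ - x₁) - angle (x - x₁) (x₂ - x₁)) ↔
      x 0 < lam₁ := by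
  set z : ℝ := x 0 with hzdef
  set D : ℝ := ‖x - x₂‖ with hD
  clear_value z D
  have hDpos : 0 < D := by
    rw [hD, norm_pos_iff, sub_ne_zero]; exact hne₂
  have hw : x₂ - x₁ = EuclideanSpace.single (0 : Fin (n+1)) (2*r) := by
    rw [hx₁, hx₂]
    ext j
    rw [PiLp.sub_apply]
    simp only [EuclideanSpace.single_apply]
    by_cases h : j = 0 <;> simp [h] <;> ring
  have hnw : ‖x₂ - x₁‖ = 2*r := by
    rw [hw, EuclideanSpace.norm_single, Real.norm_eq_abs, abs_of_pos (by positivity)]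
  have hx10 : (x - x₁) 0 = z + r := by
    rw [PiLp.sub_apply, hx₁]; simp [EuclideanSpace.single_apply, hzdef]
  have hx20 : (x - x₂) 0 = z - r := by
    rw [PiLp.sub_apply, hx₂]; simp [EuclideanSpace.single_apply, hzdef]
  have hiu : (inner ℝ (x - x₁) (x₂ - x₁) : ℝ) = 2*r*(z + r) := by
    rw [hw, EuclideanSpace.inner_single_right]
    simp [hx10]
  have hiv : (inner ℝ (x - x₂) (x₂ - x₁) : ℝ) = 2*r*(z - r) := by
    rw [hw, EuclideanSpace.inner_single_right]
    simp [hx20]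
  have hLγ : L^2 = σ₁^2 * γ₁ := by rw [hγ₁]; field_simp
  have hD2 : D^2 = γ₁ - 4*r*z := by
    have h : x - x₂ = (x - x₁) - (x₂ - x₁) := by abel
    rw [hD, h, norm_sub_sq_real, hiu, hnw, hsphere]
    rw [div_pow, ← hγ₁]
    ring
  have hc₁ : Real.cos (angle (x - x₁) (x₂ - x₁)) = σ₁*(z+r)/L := by
    rw [cos_angle, hiu, hnw, hsphere]
    field_simp
  have hc₂ : Real.cos (angle (x - x₂) (x₂ - x₁)) = (z-r)/D := by
    rw [cos_angle, hiv, hnw, ← hD]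
    rw [div_eq_div_iff (by positivity) hDpos.ne']
    ring
  -- (z+r)^2 ≤ γ₁
  have habs : |σ₁*(z+r)/L| ≤ 1 := by rw [← hc₁]; exact Real.abs_cos_le_one _
  have hsq1 : (σ₁*(z+r)/L)^2 ≤ 1 := by
    have := abs_le.1 habs
    nlinarith [this.1, this.2]
  have hρ : 0 ≤ γ₁ - (z+r)^2 := by
    have h2 : (σ₁*(z+r))^2 ≤ L^2 := by
      rw [div_pow] at hsq1
      calc (σ₁*(z+r))^2 = (σ₁*(z+r))^2/L^2 * L^2 := by field_simp
        _ ≤ 1 * L^2 := by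
            apply mul_le_mul_of_nonneg_right hsq1 (by positivity)
        _ = L^2 := one_mul _
    have h3 : σ₁^2*(z+r)^2 ≤ σ₁^2*γ₁ := by rw [← hLγ]; nlinarith [h2]
    have h4 : (z+r)^2 ≤ γ₁ := le_of_mul_le_mul_left h3 (by positivity)
    linarith
  -- sines
  have hs₁ : Real.sin (angle (x - x₁) (x₂ - x₁)) = Real.sqrt (1 - (σ₁*(z+r)/L)^2) := by
    rw [Real.sin_eq_sqrt_one_sub_cos_sq (angle_nonneg _ _) (angle_le_pi _ _), hc₁]
  have hc₂abs : |(z-r)/D| ≤ 1 := by rw [← hc₂]; exact Real.abs_cos_le_one _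
  have hsq2 : ((z-r)/D)^2 ≤ 1 := by
    have := abs_le.1 hc₂abs
    nlinarith [this.1, this.2]
  have hs₂ : Real.sin (angle (x - x₂) (x₂ - x₁)) = Real.sqrt (1 - ((z-r)/D)^2) := by
    rw [Real.sin_eq_sqrt_one_sub_cos_sq (angle_nonneg _ _) (angle_le_pi _ _), hc₂]
  have hsprod : Real.sin (angle (x - x₁) (x₂ - x₁)) * Real.sin (angle (x - x₂) (x₂ - x₁))
      = σ₁*(γ₁-(z+r)^2)/(L*D) := by
    rw [hs₁, hs₂, ← Real.sqrt_mul (by linarith)]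
    rw [show (1 - (σ₁*(z+r)/L)^2) * (1 - ((z-r)/D)^2) = (σ₁*(γ₁-(z+r)^2)/(L*D))^2 by
      field_simp
      linear_combination (D^2-(z-r)^2)*hLγ + (σ₁^2*(γ₁-(z+r)^2))*hD2]
    exact Real.sqrt_sq (by positivity)
  -- key: angle ordering
  have hid : ((z-r)*L)^2 - (σ₁*(z+r)*D)^2 = (-(4*r*z))*(σ₁^2*(γ₁-(z+r)^2)) := by
    linear_combination ((z-r)^2)*hLγ - (σ₁^2*(z+r)^2)*hD2
  have hcle : (z - r)/D ≤ σ₁*(z+r)/L := by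
    rw [div_le_div_iff₀ hDpos hL]
    by_cases hbz : z - r ≤ 0
    · by_cases haz : 0 ≤ z + r
      · have h5 : (z-r)*L ≤ 0 := mul_nonpos_of_nonpos_of_nonneg hbz hL.le
        have h6 : 0 ≤ σ₁*(z+r)*D := by
          apply mul_nonneg (mul_nonneg hσ₁.le haz) hDpos.le
        linarith
      · push_neg at haz
        have hzneg : z < 0 := by linarith
        have h0 : (0:ℝ) ≤ -(4*r*z) := by
          have := mul_nonneg hr.le (neg_nonneg.2 hzneg.le)
          nlinarith [this]
        have hsq : (σ₁*(z+r)*D)^2 ≤ ((z-r)*L)^2 := by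
          have h9 := mul_nonneg h0 (mul_nonneg (sq_nonneg σ₁) hρ)
          linarith [hid, h9]
        have h5 : (z-r)*L < 0 := mul_neg_of_neg_of_pos (by linarith) hL
        have h6 : σ₁*(z+r)*D < 0 :=
          mul_neg_of_neg_of_pos (mul_neg_of_pos_of_neg hσ₁ (by linarith)) hDpos
        exact sq_le_neg h6.le h5.le hsq
    · push_neg at hbz
      have hzpos : 0 < z := by linarith
      have h0 : (0:ℝ) ≤ 4*r*z := by positivity
      have hsq : ((z-r)*L)^2 ≤ (σ₁*(z+r)*D)^2 := by
        have h9 := mul_nonneg h0 (mul_nonneg (sq_nonneg σ₁) hρ)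
        linarith [hid, h9]
      have h5 : (0:ℝ) ≤ (z-r)*L := mul_nonneg (by linarith) hL.le
      have h6 : (0:ℝ) ≤ σ₁*(z+r)*D := mul_nonneg (mul_nonneg hσ₁.le (by linarith)) hDpos.le
      exact sq_le_pos h5 h6 hsq
  have ha₁le : angle (x - x₁) (x₂ - x₁) ≤ angle (x - x₂) (x₂ - x₁) := by
    have h1 : Real.cos (angle (x - x₂) (x₂ - x₁)) ≤ Real.cos (angle (x - x₁) (x₂ - x₁)) := by
      rw [hc₁, hc₂]; exact hcle
    by_contra hcon
    push_neg at hcon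
    have := Real.cos_lt_cos_of_nonneg_of_le_pi (angle_nonneg (x-x₂) (x₂-x₁))
      (angle_le_pi (x-x₁) (x₂-x₁)) hcon
    linarith
  -- reduce the goal
  have h1 : σ₁ / L * ‖x - x₁‖ = 1 := by
    rw [hsphere]; field_simp
  rw [h1, Real.arccos_one, zero_add]
  have hcA1 : σ₂ / L * D ≤ 1 := by
    calc σ₂/L*D ≤ σ₂/L*(L/σ₂) := mul_le_mul_of_nonneg_left hball (by positivity)
      _ = 1 := by field_simp
  have hcA0 : (0:ℝ) ≤ σ₂ / L * D := by positivity
  have hAmem : Real.arccos (σ₂/L*D) ∈ Set.Icc 0 π :=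
    ⟨Real.arccos_nonneg _, Real.arccos_le_pi _⟩
  have hPDmem : π - (angle (x - x₂) (x₂ - x₁) - angle (x - x₁) (x₂ - x₁)) ∈ Set.Icc 0 π := by
    constructor
    · have h2 := angle_le_pi (x-x₂) (x₂-x₁)
      have h3 := angle_nonneg (x-x₁) (x₂-x₁)
      linarith
    · linarith [ha₁le]
  rw [← Real.strictAntiOn_cos.lt_iff_gt hPDmem hAmem,
    Real.cos_arccos (by linarith) hcA1, Real.cos_pi_sub, Real.cos_sub, hc₁, hc₂,
    mul_comm (Real.sin (angle (x - x₂) (x₂ - x₁))) (Real.sin (angle (x - x₁) (x₂ - x₁))),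
    hsprod]
  have e1 : -((z-r)/D * (σ₁*(z+r)/L) + σ₁*(γ₁-(z+r)^2)/(L*D)) = σ₁*(2*r*z + 2*r^2 - γ₁)/(L*D) := by
    field_simp
    ring
  have e2 : σ₂/L*D = σ₂*D^2/(L*D) := by
    field_simp
  rw [e1, e2, div_lt_div_iff_of_pos_right (by positivity), hD2]
  have hlam' : lam₁ * (2*r*(σ₁+2*σ₂)) = (σ₁+σ₂)*γ₁ - 2*r^2*σ₁ := by
    rw [hlam, hβ]; field_simp
  have hpos : (0:ℝ) < 2*r*(σ₁+2*σ₂) := by positivity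
  constructor
  · intro h
    have h7 : z * (2*r*(σ₁+2*σ₂)) < lam₁ * (2*r*(σ₁+2*σ₂)) := by
      rw [hlam']; linarith [h]
    exact lt_of_mul_lt_mul_right h7 hpos.le
  · intro h
    have h7 : z * (2*r*(σ₁+2*σ₂)) < lam₁ * (2*r*(σ₁+2*σ₂)) := mul_lt_mul_of_pos_right h hpos
    rw [hlam'] at h7
    linarith [h7]
end

section
/- Let C ⊂ ℝⁿ be a compact convex set, f: ℝⁿ → ℝ differentiable and σ-strongly convex, and suppose ‖∇f(x)‖ ≤ L for all x ∈ C. Then for any x₀ in the interior of C, ‖∇f(x₀)‖ ≤ L − σ·d(x₀, ∂C), where d(x₀, ∂C) = inf_{x ∈ ∂C} ‖x − x₀‖. -/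
open Real

/-- If `f` is σ-strongly convex with `‖∇f‖ ≤ L` on a compact convex set `C`, then at any
interior point `x₀` of `C`, `‖∇f(x₀)‖ ≤ L - σ·d(x₀, ∂C)`. -/
theorem stmt15 {n : ℕ} (σ L : ℝ) (hσ : 0 < σ) (hL : 0 ≤ L)
    (C : Set (EuclideanSpace ℝ (Fin n))) (hC : IsCompact C) (hconv : Convex ℝ C)
    (f : EuclideanSpace ℝ (Fin n) → ℝ)
    (f' : EuclideanSpace ℝ (Fin n) → EuclideanSpace ℝ (Fin n))
    (hdiff : ∀ x, HasGradientAt f (f' x) x)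
    (hsc : ∀ x y, σ * ‖x - y‖ ^ 2 ≤ (inner ℝ (f' x - f' y) (x - y) : ℝ))
    (hgrad : ∀ x ∈ C, ‖f' x‖ ≤ L)
    (x₀ : EuclideanSpace ℝ (Fin n)) (hx₀ : x₀ ∈ interior C) :
    ‖f' x₀‖ ≤ L - σ * Metric.infDist x₀ (frontier C) := by
  have hx₀C : x₀ ∈ C := interior_subset hx₀
  by_cases hfr : (frontier C).Nonempty
  · have hfrC : frontier C ⊆ C := hC.isClosed.frontier_subset
    have hfc : IsCompact (frontier C) :=
      hC.of_isClosed_subset isClosed_frontier hfrC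
    have hd0 : 0 ≤ Metric.infDist x₀ (frontier C) := Metric.infDist_nonneg
    by_cases hg : f' x₀ = 0
    · -- need σ·d ≤ L
      rw [hg, norm_zero]
      obtain ⟨y, hyF, hyd⟩ := hfc.exists_infDist_eq_dist hfr x₀
      have hyC : y ∈ C := hfrC hyF
      have h1 := hsc y x₀
      rw [hg, sub_zero] at h1
      have h2 : (inner ℝ (f' y) (y - x₀) : ℝ) ≤ L * ‖y - x₀‖ :=
        le_trans (real_inner_le_norm _ _)
          (mul_le_mul_of_nonneg_right (hgrad y hyC) (norm_nonneg _))
      have hdy : Metric.infDist x₀ (frontier C) = ‖y - x₀‖ := by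
        rw [hyd, dist_comm, dist_eq_norm]
      rw [hdy] at *
      rcases eq_or_lt_of_le (norm_nonneg (y - x₀)) with h | h
      · rw [← h]; simpa using hL
      · nlinarith
    · set g := f' x₀ with hgdef
      have hgn : 0 < ‖g‖ := norm_pos_iff.mpr hg
      obtain ⟨u, hu⟩ : ∃ v : EuclideanSpace ℝ (Fin n), v = ‖g‖⁻¹ • g := ⟨_, rfl⟩
      have hun : ‖u‖ = 1 := by
        rw [hu, norm_smul, norm_inv, norm_norm]
        field_simp
      set S := {t : ℝ | 0 ≤ t ∧ x₀ + t • u ∈ C} with hS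
      have h0S : (0:ℝ) ∈ S := ⟨le_rfl, by simpa using hx₀C⟩
      obtain ⟨r, hr⟩ := hC.isBounded.subset_closedBall x₀
      have hbdd : BddAbove S := by
        refine ⟨r, fun t ht => ?_⟩
        have h := hr ht.2
        rw [Metric.mem_closedBall, dist_eq_norm] at h
        have : x₀ + t • u - x₀ = t • u := by abel
        rw [this, norm_smul, hun, mul_one, Real.norm_eq_abs, abs_of_nonneg ht.1] at h
        exact h
      have hScl : IsClosed S := by
        have hSeq : S = Set.Ici (0:ℝ) ∩ ((fun t : ℝ => x₀ + t • u) ⁻¹' C) := by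
          ext t; simp [hS, Set.mem_setOf_eq]
        rw [hSeq]
        exact isClosed_Ici.inter (hC.isClosed.preimage (by continuity))
      set t := sSup S with ht
      have htS : t ∈ S := hScl.csSup_mem ⟨0, h0S⟩ hbdd
      have ht0 : 0 ≤ t := htS.1
      set x := x₀ + t • u with hx
      have hxC : x ∈ C := htS.2
      have hxF : x ∈ frontier C := by
        rw [frontier_eq_closure_inter_closure]
        refine ⟨subset_closure hxC, ?_⟩
        rw [Metric.mem_closure_iff]
        intro ε hε
        refine ⟨x₀ + (t + ε/2) • u, ?_, ?_⟩
        · intro hmem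
          have hmem' : t + ε/2 ∈ S := ⟨by linarith, hmem⟩
          have := le_csSup hbdd hmem'
          linarith
        · rw [dist_eq_norm]
          have hdiffeq : x - (x₀ + (t + ε/2) • u) = (-(ε/2)) • u := by
            rw [hx]; module
          rw [hdiffeq, norm_smul, hun, mul_one, Real.norm_eq_abs]
          rw [abs_of_nonpos (by linarith)]
          linarith
      have htpos : 0 < t := by
        rcases eq_or_lt_of_le ht0 with h | h
        · exfalso
          have hxx : x = x₀ := by rw [hx, ← h]; simp
          rw [hxx] at hxF
          exact disjoint_interior_frontier.ne_of_mem hx₀ hxF rfl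
        · exact h
      have hdt : Metric.infDist x₀ (frontier C) ≤ t := by
        have := Metric.infDist_le_dist_of_mem (x := x₀) hxF
        rw [dist_eq_norm] at this
        have hxx : x₀ - x = (-t) • u := by rw [hx]; module
        rw [hxx, norm_smul, hun, mul_one, Real.norm_eq_abs, abs_of_nonpos (by linarith)] at this
        simpa using this
      have h1 := hsc x x₀
      have hxsub : x - x₀ = t • u := by rw [hx]; abel
      rw [hxsub] at h1
      have hnorm : ‖t • u‖ = t := by
        rw [norm_smul, hun, mul_one, Real.norm_eq_abs, abs_of_nonneg ht0]
      rw [hnorm] at h1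
      have hgu : (inner ℝ g u : ℝ) = ‖g‖ := by
        rw [hu, real_inner_smul_right, real_inner_self_eq_norm_sq, sq]
        field_simp
      have hinner : (inner ℝ (f' x - g) (t • u) : ℝ)
          = t * (inner ℝ (f' x) u : ℝ) - t * ‖g‖ := by
        rw [inner_sub_left, real_inner_smul_right, real_inner_smul_right, hgu]
      rw [hinner] at h1
      have h2 : (inner ℝ (f' x) u : ℝ) ≤ L := by
        calc (inner ℝ (f' x) u : ℝ) ≤ ‖f' x‖ * ‖u‖ := real_inner_le_norm _ _
        _ = ‖f' x‖ := by rw [hun, mul_one]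
        _ ≤ L := hgrad x hxC
      nlinarith [mul_pos hσ htpos, mul_le_mul_of_nonneg_left h2 ht0]
  · have hfre : frontier C = ∅ := Set.not_nonempty_iff_eq_empty.mp hfr
    rw [hfre, Metric.infDist_empty]
    simpa using hgrad x₀ hx₀C
end

section
/- Let C ⊂ ℝⁿ be a compact convex set, f₁ σ₁-strongly convex and f₂ σ₂-strongly convex differentiable functions with ‖∇f_i(x)‖ ≤ L for all x ∈ C. If x₀ is an interior point of C minimizing f₁ + f₂ over C (so ∇f₁(x₀) = −∇f₂(x₀)), then ‖∇f₁(x₀)‖ = ‖∇f₂(x₀)‖ ≤ L − min(σ₁, σ₂)·d(x₀, ∂C). -/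
/-!
At an interior minimiser `x₀` of `f₁ + f₂` the gradients cancel, so `‖∇f₁(x₀)‖ = ‖∇f₂(x₀)‖`.
The open ball of radius `d = d(x₀, ∂C)` around `x₀` lies in `C`. Testing strong monotonicity of
`∇f₁` between `x₀` and `x₀ + t v`, where `t < d` and `v` is the unit vector in the direction of
`∇f₁(x₀)`, gives `σ₁ t² ≤ t (L - ‖∇f₁(x₀)‖)`; dividing by `t` and letting `t → d` yields
`‖∇f₁(x₀)‖ ≤ L - σ₁ d`.
-/

open Metric Set

section Gradient

variable {𝕜 F : Type*} [RCLike 𝕜] [NormedAddCommGroup F] [InnerProductSpace 𝕜 F] [CompleteSpace F]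

theorem HasGradientAt.add {f g : F → 𝕜} {f' g' x : F} (hf : HasGradientAt f f' x)
    (hg : HasGradientAt g g' x) : HasGradientAt (f + g) (f' + g') x := by
  rw [hasGradientAt_iff_hasFDerivAt, map_add]
  exact hf.hasFDerivAt.add hg.hasFDerivAt

end Gradient

theorem IsLocalMin.hasGradientAt_eq_zero {F : Type*} [NormedAddCommGroup F]
    [InnerProductSpace ℝ F] [CompleteSpace F] {f : F → ℝ} {f' a : F} (h : IsLocalMin f a)
    (hf : HasGradientAt f f' a) : f' = 0 := by
  simpa using h.hasFDerivAt_eq_zero hf.hasFDerivAt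

theorem ball_infDist_frontier_subset_interior {E : Type*} [NormedAddCommGroup E]
    [NormedSpace ℝ E] {s : Set E} {x : E} (hx : x ∈ interior s) :
    ball x (infDist x (frontier s)) ⊆ interior s := by
  rcases (infDist_nonneg (x := x) (s := frontier s)).eq_or_lt with hd | hd
  · simp [← hd]
  refine (convex_ball x _).isPreconnected.subset_of_closure_inter_subset isOpen_interior
    ⟨x, mem_ball_self hd, hx⟩ ?_
  rintro y ⟨hy_cl, hy_ball⟩
  by_contra hy_int
  exact disjoint_left.mp disjoint_ball_infDist hy_ball ⟨closure_mono interior_subset hy_cl, hy_int⟩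

section StronglyMonotone

variable {E : Type*} [NormedAddCommGroup E] [InnerProductSpace ℝ E]

theorem exists_norm_eq_one_inner_eq_norm [Nontrivial E] (w : E) :
    ∃ v : E, ‖v‖ = 1 ∧ inner ℝ w v = ‖w‖ := by
  rcases eq_or_ne w 0 with rfl | hw
  · obtain ⟨v, hv⟩ := exists_norm_eq E zero_le_one
    exact ⟨v, hv, by simp⟩
  · refine ⟨‖w‖⁻¹ • w, norm_smul_inv_norm hw, ?_⟩
    rw [real_inner_smul_right, real_inner_self_eq_norm_sq]
    field_simp

variable [Nontrivial E] {f' : E → E} {x₀ : E} {σ L r : ℝ}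

theorem norm_add_mul_le_of_forall_mem_closedBall (hr : 0 ≤ r)
    (hmono : ∀ x ∈ closedBall x₀ r, σ * ‖x - x₀‖ ^ 2 ≤ inner ℝ (f' x - f' x₀) (x - x₀))
    (hbound : ∀ x ∈ closedBall x₀ r, ‖f' x‖ ≤ L) :
    ‖f' x₀‖ + σ * r ≤ L := by
  rcases hr.eq_or_lt with rfl | hr
  · simpa using hbound x₀ (mem_closedBall_self le_rfl)
  obtain ⟨v, hv, hv_inner⟩ := exists_norm_eq_one_inner_eq_norm (f' x₀)
  set x := x₀ + r • v
  have hxx₀ : x - x₀ = r • v := add_sub_cancel_left _ _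
  have hx : x ∈ closedBall x₀ r := by
    rw [mem_closedBall, dist_eq_norm, hxx₀, norm_smul, hv, Real.norm_of_nonneg hr.le, mul_one]
  have hxv : inner ℝ (f' x) v ≤ L :=
    (real_inner_le_norm _ _).trans (by rw [hv, mul_one]; exact hbound x hx)
  have h := hmono x hx
  rw [hxx₀, norm_smul, hv, Real.norm_of_nonneg hr.le, inner_sub_left, real_inner_smul_right,
    real_inner_smul_right, hv_inner] at h
  have : r * (σ * r) ≤ r * (L - ‖f' x₀‖) := by nlinarith
  linarith [le_of_mul_le_mul_left this hr]

theorem norm_add_mul_le_of_forall_mem_ball (hr : 0 < r)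
    (hmono : ∀ x ∈ ball x₀ r, σ * ‖x - x₀‖ ^ 2 ≤ inner ℝ (f' x - f' x₀) (x - x₀))
    (hbound : ∀ x ∈ ball x₀ r, ‖f' x‖ ≤ L) :
    ‖f' x₀‖ + σ * r ≤ L := by
  have hIco : Ico 0 r ⊆ {t | ‖f' x₀‖ + σ * t ≤ L} := fun t ⟨ht, htr⟩ =>
    norm_add_mul_le_of_forall_mem_closedBall ht
      (fun x hx => hmono x (closedBall_subset_ball htr hx))
      (fun x hx => hbound x (closedBall_subset_ball htr hx))
  have hclosed : IsClosed {t : ℝ | ‖f' x₀‖ + σ * t ≤ L} :=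
    isClosed_le (by fun_prop) continuous_const
  have := closure_minimal hIco hclosed
  rw [closure_Ico hr.ne] at this
  exact this ⟨hr.le, le_rfl⟩

end StronglyMonotone

theorem stmt16_general {n : ℕ} (σ₁ σ₂ L : ℝ)
    (C : Set (EuclideanSpace ℝ (Fin n)))
    (f₁ f₂ : EuclideanSpace ℝ (Fin n) → ℝ)
    (f₁' f₂' : EuclideanSpace ℝ (Fin n) → EuclideanSpace ℝ (Fin n))
    (hd₁ : ∀ x, HasGradientAt f₁ (f₁' x) x)
    (hd₂ : ∀ x, HasGradientAt f₂ (f₂' x) x)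
    (hsc₁ : ∀ x y, σ₁ * ‖x - y‖ ^ 2 ≤ (inner ℝ (f₁' x - f₁' y) (x - y) : ℝ))
    (hg₁ : ∀ x ∈ C, ‖f₁' x‖ ≤ L)
    (x₀ : EuclideanSpace ℝ (Fin n)) (hx₀ : x₀ ∈ interior C)
    (hmin : IsMinOn (f₁ + f₂) C x₀) :
    ‖f₁' x₀‖ = ‖f₂' x₀‖ ∧
      ‖f₁' x₀‖ ≤ L - min σ₁ σ₂ * Metric.infDist x₀ (frontier C) := by
  have hsum : f₁' x₀ + f₂' x₀ = 0 :=
    (hmin.isLocalMin (mem_interior_iff_mem_nhds.mp hx₀)).hasGradientAt_eq_zero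
      ((hd₁ x₀).add (hd₂ x₀))
  refine ⟨by rw [eq_neg_of_add_eq_zero_left hsum, norm_neg], ?_⟩
  rcases (infDist_nonneg (x := x₀) (s := frontier C)).eq_or_lt with hd | hd
  · rw [← hd, mul_zero, sub_zero]
    exact hg₁ x₀ (interior_subset hx₀)
  obtain ⟨z, hz⟩ : (frontier C).Nonempty :=
    nonempty_iff_ne_empty.mpr fun h => by simp [h] at hd
  have : Nontrivial (EuclideanSpace ℝ (Fin n)) :=
    nontrivial_of_ne x₀ z (disjoint_interior_frontier.ne_of_mem hx₀ hz)
  have hσ : min σ₁ σ₂ * infDist x₀ (frontier C) ≤ σ₁ * infDist x₀ (frontier C) :=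
    mul_le_mul_of_nonneg_right (min_le_left _ _) hd.le
  have := norm_add_mul_le_of_forall_mem_ball hd (fun x _ => hsc₁ x x₀)
    (fun x hx => hg₁ x (interior_subset (ball_infDist_frontier_subset_interior hx₀ hx)))
  linarith

/-- If `f₁, f₂` are strongly convex with `‖∇fᵢ‖ ≤ L` on a compact convex set `C`, and the
interior point `x₀` minimizes `f₁ + f₂` over `C` (so `∇f₁(x₀) = -∇f₂(x₀)`), then
`‖∇f₁(x₀)‖ = ‖∇f₂(x₀)‖ ≤ L - min(σ₁, σ₂)·d(x₀, ∂C)`. -/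
theorem stmt16 {n : ℕ} (σ₁ σ₂ L : ℝ) (hσ₁ : 0 < σ₁) (hσ₂ : 0 < σ₂) (hL : 0 ≤ L)
    (C : Set (EuclideanSpace ℝ (Fin n))) (hC : IsCompact C) (hconv : Convex ℝ C)
    (f₁ f₂ : EuclideanSpace ℝ (Fin n) → ℝ)
    (f₁' f₂' : EuclideanSpace ℝ (Fin n) → EuclideanSpace ℝ (Fin n))
    (hd₁ : ∀ x, HasGradientAt f₁ (f₁' x) x)
    (hd₂ : ∀ x, HasGradientAt f₂ (f₂' x) x)
    (hsc₁ : ∀ x y, σ₁ * ‖x - y‖ ^ 2 ≤ (inner ℝ (f₁' x - f₁' y) (x - y) : ℝ))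
    (hsc₂ : ∀ x y, σ₂ * ‖x - y‖ ^ 2 ≤ (inner ℝ (f₂' x - f₂' y) (x - y) : ℝ))
    (hg₁ : ∀ x ∈ C, ‖f₁' x‖ ≤ L) (hg₂ : ∀ x ∈ C, ‖f₂' x‖ ≤ L)
    (x₀ : EuclideanSpace ℝ (Fin n)) (hx₀ : x₀ ∈ interior C)
    (hmin : IsMinOn (f₁ + f₂) C x₀) :
    ‖f₁' x₀‖ = ‖f₂' x₀‖ ∧
      ‖f₁' x₀‖ ≤ L - min σ₁ σ₂ * Metric.infDist x₀ (frontier C) :=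
  stmt16_general σ₁ σ₂ L C f₁ f₂ f₁' f₂' hd₁ hd₂ hsc₁ hg₁ x₀ hx₀ hmin
end

section
/- Let u₁, u₂ be unit vectors in ℝⁿ with angle ψ = ∠(u₁, −u₂) between u₁ and −u₂, and let φ̃₁, φ̃₂ ∈ [0, π/2]. If φ̃₁ + φ̃₂ ≥ ψ, then there exists a nonzero vector g ∈ ℝⁿ with ∠(g, u₁) ≤ φ̃₁ and ∠(−g, u₂) ≤ φ̃₂. Conversely, if φ̃₁ + φ̃₂ < ψ, no such nonzero g exists. -/
open Real InnerProductGeometry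

open scoped RealInnerProductSpace

private lemma arccos_antitone : Antitone Real.arccos := fun x y h => by
  unfold Real.arccos
  have := Real.monotone_arcsin h
  linarith

/-- Triangle inequality for angles between unit vectors. -/
private lemma angle_triangle_unit {V : Type*} [NormedAddCommGroup V] [InnerProductSpace ℝ V]
    (x y z : V) (hx : ‖x‖ = 1) (hy : ‖y‖ = 1) (hz : ‖z‖ = 1) :
    angle x z ≤ angle x y + angle y z := by
  by_cases hbig : π ≤ angle x y + angle y z
  · exact le_trans (angle_le_pi x z) hbig
  push_neg at hbig
  set a := ⟪x, y⟫ with ha_def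
  set b := ⟪y, z⟫ with hb_def
  have ha1 : |a| ≤ 1 := by
    rw [ha_def]
    have := abs_real_inner_le_norm x y
    rw [hx, hy, mul_one] at this
    exact this
  have hb1 : |b| ≤ 1 := by
    rw [hb_def]
    have := abs_real_inner_le_norm y z
    rw [hy, hz, mul_one] at this
    exact this
  have ha1' := abs_le.mp ha1
  have hb1' := abs_le.mp hb1
  have hyy : ⟪y, y⟫ = 1 := by rw [real_inner_self_eq_norm_sq, hy]; norm_num
  have hyx : ⟪y, x⟫ = a := (real_inner_comm x y).trans ha_def.symm
  have hzy : ⟪z, y⟫ = b := (real_inner_comm y z).trans hb_def.symm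
  have hax : angle x y = Real.arccos a := by
    rw [angle, hx, hy]; norm_num; rfl
  have hbz : angle y z = Real.arccos b := by
    rw [angle, hy, hz]; norm_num; rfl
  have hxz : angle x z = Real.arccos ⟪x, z⟫ := by
    rw [angle, hx, hz]; norm_num
  have hinner : ⟪x - a • y, z - b • y⟫ = ⟪x, z⟫ - a * b := by
    simp only [inner_sub_left, inner_sub_right, real_inner_smul_left, real_inner_smul_right,
      hyy, hzy]
    rw [← hb_def]
    ring
  have hnx : ‖x - a • y‖ = Real.sqrt (1 - a ^ 2) := by
    have h2 : ‖x - a • y‖ ^ 2 = 1 - a ^ 2 := by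
      rw [norm_sub_sq_real, real_inner_smul_right, ← ha_def, hx, norm_smul, hy,
        Real.norm_eq_abs, mul_one, sq_abs]
      ring
    rw [← h2, Real.sqrt_sq (norm_nonneg _)]
  have hnz : ‖z - b • y‖ = Real.sqrt (1 - b ^ 2) := by
    have h2 : ‖z - b • y‖ ^ 2 = 1 - b ^ 2 := by
      rw [norm_sub_sq_real, real_inner_smul_right, hzy, hz, norm_smul, hy,
        Real.norm_eq_abs, mul_one, sq_abs]
      ring
    rw [← h2, Real.sqrt_sq (norm_nonneg _)]
  have hcs := abs_real_inner_le_norm (x - a • y) (z - b • y)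
  rw [hinner, hnx, hnz] at hcs
  have hkey : a * b - Real.sqrt (1 - a ^ 2) * Real.sqrt (1 - b ^ 2) ≤ ⟪x, z⟫ := by
    have := abs_le.mp hcs
    linarith [this.1]
  have hcos : Real.cos (Real.arccos a + Real.arccos b) =
      a * b - Real.sqrt (1 - a ^ 2) * Real.sqrt (1 - b ^ 2) := by
    rw [Real.cos_add, Real.cos_arccos ha1'.1 ha1'.2, Real.cos_arccos hb1'.1 hb1'.2,
      Real.sin_arccos, Real.sin_arccos]
  rw [hxz, hax, hbz]
  calc Real.arccos ⟪x, z⟫ ≤ Real.arccos (Real.cos (Real.arccos a + Real.arccos b)) := by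
        apply arccos_antitone; rw [hcos]; exact hkey
    _ = Real.arccos a + Real.arccos b := by
        apply Real.arccos_cos
        · exact add_nonneg (Real.arccos_nonneg a) (Real.arccos_nonneg b)
        · rw [hax, hbz] at hbig; exact le_of_lt hbig

/-- Geometric core of Lemma 1: for unit vectors `u₁, u₂` in ℝⁿ (`n ≥ 2`) with
`ψ = ∠(u₁, -u₂)` and `φ₁, φ₂ ∈ [0, π/2]`, the cones `{g : ∠(g,u₁) ≤ φ₁}` and
`{g : ∠(-g,u₂) ≤ φ₂}` share a nonzero vector iff `φ₁ + φ₂ ≥ ψ`. -/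
theorem stmt19 {n : ℕ} (hn : 2 ≤ n) (u₁ u₂ : EuclideanSpace ℝ (Fin n))
    (hu₁ : ‖u₁‖ = 1) (hu₂ : ‖u₂‖ = 1)
    (φ₁ φ₂ : ℝ) (hφ₁ : φ₁ ∈ Set.Icc 0 (π / 2)) (hφ₂ : φ₂ ∈ Set.Icc 0 (π / 2)) :
    (angle u₁ (-u₂) ≤ φ₁ + φ₂ →
      ∃ g : EuclideanSpace ℝ (Fin n), g ≠ 0 ∧ angle g u₁ ≤ φ₁ ∧ angle (-g) u₂ ≤ φ₂) ∧
    (φ₁ + φ₂ < angle u₁ (-u₂) →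
      ¬ ∃ g : EuclideanSpace ℝ (Fin n), g ≠ 0 ∧ angle g u₁ ≤ φ₁ ∧ angle (-g) u₂ ≤ φ₂) := by
  have hu₁0 : u₁ ≠ 0 := fun h => by simp [h] at hu₁
  have hu₂0 : u₂ ≠ 0 := fun h => by simp [h] at hu₂
  have hneg : ∀ g : EuclideanSpace ℝ (Fin n), angle (-g) u₂ = angle g (-u₂) := by
    intro g
    rw [← angle_neg_neg g (-u₂), neg_neg]
  set ψ := angle u₁ (-u₂) with hψdef
  have hψ0 : 0 ≤ ψ := angle_nonneg _ _
  have hψπ : ψ ≤ π := angle_le_pi _ _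
  constructor
  · intro hle
    rcases eq_or_lt_of_le hψπ with hpi | hlt
    · -- ψ = π : u₂ = u₁, φ₁ = φ₂ = π/2, take orthogonal g
      have hpi' : angle u₁ (-u₂) = π := by rw [← hψdef]; exact hpi
      have hφ₁2 : φ₁ = π / 2 := le_antisymm hφ₁.2 (by
        have := hφ₂.2; rw [hpi] at hle; linarith)
      have hφ₂2 : φ₂ = π / 2 := le_antisymm hφ₂.2 (by
        have := hφ₁.2; rw [hpi] at hle; linarith)
      have hu : u₂ = u₁ := by
        obtain ⟨-, r, hr, hru⟩ := angle_eq_pi_iff.mp hpi'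
        have hnorm : ‖(-u₂ : EuclideanSpace ℝ (Fin n))‖ = ‖r • u₁‖ := by rw [hru]
        rw [norm_neg, hu₂, norm_smul, hu₁, Real.norm_eq_abs, mul_one,
          abs_of_neg hr] at hnorm
        have hr1 : r = -1 := by linarith
        rw [hr1, neg_one_smul] at hru
        exact neg_injective hru
      have hfin : 0 < Module.finrank ℝ ((ℝ ∙ u₁)ᗮ : Submodule ℝ (EuclideanSpace ℝ (Fin n))) := by
        have hsum := (ℝ ∙ u₁).finrank_add_finrank_orthogonal
        have hspan : Module.finrank ℝ (ℝ ∙ u₁) = 1 := finrank_span_singleton hu₁0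
        have htot : Module.finrank ℝ (EuclideanSpace ℝ (Fin n)) = n := by simp
        omega
      have hne : ((ℝ ∙ u₁)ᗮ : Submodule ℝ (EuclideanSpace ℝ (Fin n))) ≠ ⊥ := by
        intro h
        rw [h] at hfin
        simp at hfin
      obtain ⟨g, hgmem, hg0⟩ := Submodule.exists_mem_ne_zero_of_ne_bot hne
      have horth : ⟪u₁, g⟫ = 0 :=
        hgmem u₁ (Submodule.mem_span_singleton_self u₁)
      refine ⟨g, hg0, ?_, ?_⟩
      · rw [hφ₁2, ← (inner_eq_zero_iff_angle_eq_pi_div_two g u₁).mp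
          (by rw [real_inner_comm]; exact horth)]
      · rw [hu, hφ₂2, ← (inner_eq_zero_iff_angle_eq_pi_div_two (-g) u₁).mp
          (by rw [inner_neg_left, real_inner_comm u₁ g, horth, neg_zero])]
    · rcases eq_or_lt_of_le hψ0 with h0 | hpos
      · -- ψ = 0 : take g = u₁
        refine ⟨u₁, hu₁0, ?_, ?_⟩
        · rw [angle_self hu₁0]; exact hφ₁.1
        · rw [hneg, ← hψdef, ← h0]; exact hφ₂.1
      · -- 0 < ψ < π : spherical interpolation
        set c : ℝ := ⟪u₁, -u₂⟫ with hc
        have hψarc : ψ = Real.arccos c := by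
          rw [hψdef, angle, hu₁, norm_neg, hu₂, mul_one, div_one, ← hc]
        have hc1 : |c| ≤ 1 := by
          rw [hc]
          have := abs_real_inner_le_norm u₁ (-u₂ : EuclideanSpace ℝ (Fin n))
          rw [hu₁, norm_neg, hu₂, mul_one] at this
          exact this
        have hc1' := abs_le.mp hc1
        have hcosψ : Real.cos ψ = c := by
          rw [hψarc]; exact Real.cos_arccos hc1'.1 hc1'.2
        have hicos : ⟪u₁, (-u₂ : EuclideanSpace ℝ (Fin n))⟫ = Real.cos ψ := by
          rw [hcosψ, hc]
        have hsinψ : 0 < Real.sin ψ := Real.sin_pos_of_pos_of_lt_pi hpos hlt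
        set t : ℝ := min φ₁ ψ with ht
        have ht0 : 0 ≤ t := le_min hφ₁.1 hψ0
        have htψ : t ≤ ψ := min_le_right _ _
        have htφ₁ : t ≤ φ₁ := min_le_left _ _
        have hψt : ψ - t ≤ φ₂ := by
          rcases min_cases φ₁ ψ with ⟨h1, _⟩ | ⟨h1, _⟩ <;> rw [ht, h1]
          · linarith
          · simpa using hφ₂.1
        set g : EuclideanSpace ℝ (Fin n) :=
          Real.sin (ψ - t) • u₁ + Real.sin t • (-u₂) with hg
        have hiu : ⟪u₁, u₁⟫ = 1 := by
          rw [real_inner_self_eq_norm_sq, hu₁]; norm_num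
        have hivv : ⟪(-u₂ : EuclideanSpace ℝ (Fin n)), -u₂⟫ = 1 := by
          rw [real_inner_self_eq_norm_sq, norm_neg, hu₂]; norm_num
        have hivu : ⟪(-u₂ : EuclideanSpace ℝ (Fin n)), u₁⟫ = Real.cos ψ :=
          (real_inner_comm u₁ (-u₂)).trans hicos
        have hsub : Real.sin (ψ - t) = Real.sin ψ * Real.cos t - Real.cos ψ * Real.sin t :=
          Real.sin_sub ψ t
        have hi1 : ⟪g, u₁⟫ = Real.sin ψ * Real.cos t := by
          rw [hg, inner_add_left, real_inner_smul_left, real_inner_smul_left, hiu, hivu, hsub]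
          ring
        have hi2 : ⟪g, (-u₂ : EuclideanSpace ℝ (Fin n))⟫ = Real.sin ψ * Real.cos (ψ - t) := by
          rw [hg, inner_add_left, real_inner_smul_left, real_inner_smul_left, hivv, hicos,
            hsub, Real.cos_sub]
          linear_combination (-Real.sin t) * Real.sin_sq_add_cos_sq ψ
        have hgg : ⟪g, g⟫ = Real.sin ψ ^ 2 := by
          rw [hg, inner_add_left, real_inner_smul_left, real_inner_smul_left,
            inner_add_right, inner_add_right]
          simp only [real_inner_smul_right]
          rw [hiu, hivv, hivu, hicos, hsub]
          linear_combination Real.sin ψ ^ 2 * Real.sin_sq_add_cos_sq t -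
            Real.sin t ^ 2 * Real.sin_sq_add_cos_sq ψ
        have hng : ‖g‖ = Real.sin ψ := by
          have h2 : ‖g‖ ^ 2 = Real.sin ψ ^ 2 := by rw [← real_inner_self_eq_norm_sq, hgg]
          nlinarith [norm_nonneg g]
        have hg0 : g ≠ 0 := by
          intro h
          rw [h, norm_zero] at hng
          linarith
        refine ⟨g, hg0, ?_, ?_⟩
        · have hang : angle g u₁ = t := by
            rw [angle, hi1, hng, hu₁, mul_one, mul_comm (Real.sin ψ) (Real.cos t),
              mul_div_assoc, div_self (ne_of_gt hsinψ), mul_one]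
            exact Real.arccos_cos ht0 (le_trans htψ hψπ)
          rw [hang]; exact htφ₁
        · have hang : angle (-g) u₂ = ψ - t := by
            rw [hneg, angle, hi2, hng, norm_neg, hu₂, mul_one,
              mul_comm (Real.sin ψ) (Real.cos (ψ - t)),
              mul_div_assoc, div_self (ne_of_gt hsinψ), mul_one]
            exact Real.arccos_cos (by linarith) (by linarith)
          rw [hang]; exact hψt
  · rintro hlt ⟨g, hg0, h1, h2⟩
    have hgn : 0 < ‖g‖ := norm_pos_iff.mpr hg0
    set w : EuclideanSpace ℝ (Fin n) := ‖g‖⁻¹ • g with hw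
    have hwn : ‖w‖ = 1 := by
      rw [hw, norm_smul, norm_inv, norm_norm, inv_mul_cancel₀ (ne_of_gt hgn)]
    have hwg1 : angle w u₁ = angle g u₁ := angle_smul_left_of_pos g u₁ (inv_pos.mpr hgn)
    have hwg2 : angle w (-u₂) = angle g (-u₂) := angle_smul_left_of_pos g (-u₂) (inv_pos.mpr hgn)
    have htri := angle_triangle_unit u₁ w (-u₂) hu₁ hwn (by rw [norm_neg, hu₂])
    rw [angle_comm u₁ w, hwg1, hwg2, ← hneg g, ← hψdef] at htri
    linarith
end
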